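/- arXiv:2602.14484 — 2 statements merged into one kernel-verified Lean document; each statement's English description precedes it below -/
import Mathlib

section
/- π/4 = 1/2 + Σ_{k=1}^{∞} (-1)^{k+1}/((2k)² − 1), i.e., π/4 = 1/2 + 1/(2²−1) − 1/(4²−1) + 1/(6²−1) − ⋯. -/
open Filter Real

lemma key_17 (m : ℕ) :
    1 / 2 + ∑ k ∈ Finset.Icc 1 m, (-1 : ℝ) ^ (k + 1) / ((2 * (k : ℝ)) ^ 2 - 1) =
      (∑ i ∈ Finset.range (m + 1), (-1 : ℝ) ^ i / (2 * i + 1)) +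
        (-1 : ℝ) ^ (m + 1) / (2 * (2 * m + 1)) := by
  induction m with
  | zero => norm_num
  | succ n ih =>
    rw [Finset.sum_Icc_succ_top (by omega : 1 ≤ n + 1), ← add_assoc, ih,
      Finset.sum_range_succ (n := n + 1)]
    push_cast
    have h1 : (2 * (n : ℝ) + 1) ≠ 0 := by positivity
    have h2 : (2 * ((n : ℝ) + 1) + 1) ≠ 0 := by positivity
    have h3 : (2 * ((n : ℝ) + 1)) ^ 2 - 1 ≠ 0 := by nlinarith [Nat.cast_nonneg (α := ℝ) n]
    have h4 : (2 * ((n : ℝ) + 1)) ^ 2 - 1 = (2 * (n : ℝ) + 1) * (2 * ((n : ℝ) + 1) + 1) := by ring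
    rw [h4]
    field_simp
    ring

theorem stmt_17 :
    Tendsto
      (fun m : ℕ => 1 / 2 + ∑ k ∈ Finset.Icc 1 m, (-1 : ℝ) ^ (k + 1) / ((2 * (k : ℝ)) ^ 2 - 1))
      atTop (nhds (π / 4)) := by
  have h := Real.tendsto_sum_pi_div_four.comp (tendsto_add_atTop_nat 1)
  have hz : Tendsto (fun m : ℕ => (-1 : ℝ) ^ (m + 1) / (2 * (2 * m + 1))) atTop (nhds 0) := by
    refine squeeze_zero_norm' (a := fun m : ℕ => 1 / (m : ℝ)) ?_ tendsto_one_div_atTop_nhds_zero_nat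
    filter_upwards [eventually_ge_atTop 1] with m hm
    have hm' : (1 : ℝ) ≤ m := by exact_mod_cast hm
    rw [norm_div, norm_pow, norm_neg, norm_one, one_pow, one_div, one_div,
      Real.norm_eq_abs, abs_of_pos (by positivity)]
    apply inv_anti₀ (by linarith)
    nlinarith
  have := h.add hz
  rw [add_zero] at this
  refine this.congr fun m => ?_
  simp only [Function.comp]
  rw [← key_17 m]
end

section
/- For all natural numbers M ≥ 1, the truncated arc-bit sum satisfies |lim_{n→∞}(1/n)Σ_{i=0}^{n-1} 1/(1+(i/n)²) − Σ_{p=0}^{m}(-1)^p/(2p+1)| ≤ 2/(2M+1) for all m ≥ M, provided the limit exists. -/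
open Filter

open Real in
lemma riemann_lim : Tendsto (fun n : ℕ => (1 / (n : ℝ)) *
    ∑ i ∈ Finset.range n, 1 / (1 + ((i : ℝ) / n) ^ 2)) atTop (nhds (π / 4)) := by
  have key : ∀ n : ℕ, 1 ≤ n →
      π / 4 ≤ (1 / (n : ℝ)) * ∑ i ∈ Finset.range n, 1 / (1 + ((i : ℝ) / n) ^ 2) ∧
      (1 / (n : ℝ)) * ∑ i ∈ Finset.range n, 1 / (1 + ((i : ℝ) / n) ^ 2)
        ≤ π / 4 + (1 / 2) * (1 / n) := by
    intro n hn
    have hn0 : (0 : ℝ) < n := by exact_mod_cast hn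
    set g : ℝ → ℝ := fun t => 1 / (1 + (t / n) ^ 2) with hg
    have hanti : AntitoneOn g (Set.Icc (0 : ℝ) (0 + n)) := by
      intro x hx y hy hxy
      have hd : (0:ℝ) < 1 + (x / n) ^ 2 := by positivity
      have hxy2 : (1:ℝ) + (x / n) ^ 2 ≤ 1 + (y / n) ^ 2 := by
        have h1 : x / n ≤ y / n := div_le_div_of_nonneg_right hxy hn0.le
        have h2 : (0:ℝ) ≤ x / n := div_nonneg hx.1 hn0.le
        nlinarith
      exact one_div_le_one_div_of_le hd hxy2
    have hint : (∫ x in (0:ℝ)..(0 + n), g x) = n * (π / 4) := by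
      simp only [hg, zero_add]
      rw [intervalIntegral.integral_comp_div (f := fun x => 1 / (1 + x ^ 2)) hn0.ne']
      rw [zero_div, div_self hn0.ne']
      have h := integral_one_div_one_add_sq (a := (0:ℝ)) (b := 1)
      push_cast at h
      rw [h]
      simp [Real.arctan_one]
    have h1 : (∫ x in (0:ℝ)..(0 + n), g x) ≤ ∑ i ∈ Finset.range n, g (0 + i) :=
      hanti.integral_le_sum
    have h2 : (∑ i ∈ Finset.range n, g (0 + (i + 1 : ℕ))) ≤ ∫ x in (0:ℝ)..(0 + n), g x :=
      hanti.sum_le_integral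
    simp only [zero_add] at h1 h2 hint
    push_cast at h1 h2
    rw [hint] at h1 h2
    have hshift : (∑ i ∈ Finset.range n, g ((i:ℝ) + 1))
        = (∑ i ∈ Finset.range n, g (i:ℝ)) + g n - g 0 := by
      have h := Finset.sum_range_succ' (fun i : ℕ => g (i:ℝ)) n
      rw [Finset.sum_range_succ] at h
      push_cast at h
      linarith
    have hg0 : g 0 = 1 := by simp [hg]
    have hgn : g n = 1 / 2 := by
      simp only [hg]
      rw [div_self hn0.ne']
      norm_num
    have hsum : (∑ i ∈ Finset.range n, g (i:ℝ))
        = ∑ i ∈ Finset.range n, 1 / (1 + ((i : ℝ) / n) ^ 2) := rfl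
    rw [hsum] at h1
    rw [hshift, hsum, hg0, hgn] at h2
    -- Now: n*(π/4) ≤ Σ  and  Σ + 1/2 - 1 ≤ n*(π/4)
    constructor
    · have e : (1 / (n:ℝ)) * (n * (π / 4)) = π / 4 := by field_simp
      have := mul_le_mul_of_nonneg_left h1 (by positivity : (0:ℝ) ≤ 1 / n)
      linarith [e ▸ this]
    · have e : (1 / (n:ℝ)) * (n * (π / 4) + 1 / 2) = π / 4 + (1 / 2) * (1 / n) := by
        field_simp
      have hle : (∑ i ∈ Finset.range n, 1 / (1 + ((i : ℝ) / n) ^ 2)) ≤ n * (π / 4) + 1 / 2 := by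
        linarith
      have := mul_le_mul_of_nonneg_left hle (by positivity : (0:ℝ) ≤ 1 / n)
      linarith [e ▸ this]
  have htail : Tendsto (fun n : ℕ => (1 : ℝ) / n) atTop (nhds 0) :=
    tendsto_one_div_atTop_nhds_zero_nat
  have hupper : Tendsto (fun n : ℕ => π / 4 + (1 / 2) * (1 / (n : ℝ))) atTop (nhds (π / 4)) := by
    have h := Tendsto.add (tendsto_const_nhds (x := π / 4) (f := (atTop : Filter ℕ)))
      (htail.const_mul (1 / 2 : ℝ))
    simpa using h
  refine tendsto_of_tendsto_of_tendsto_of_le_of_le' tendsto_const_nhds hupper ?_ ?_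
  · filter_upwards [eventually_ge_atTop 1] with n hn using (key n hn).1
  · filter_upwards [eventually_ge_atTop 1] with n hn using (key n hn).2

open Real in
lemma leibniz_err (n : ℕ) :
    |π / 4 - ∑ p ∈ Finset.range n, (-1 : ℝ) ^ p / (2 * p + 1)| ≤ 1 / (2 * n + 1) := by
  set f : ℕ → ℝ := fun p => 1 / (2 * p + 1) with hf
  set S : ℕ → ℝ := fun k => ∑ i ∈ Finset.range k, (-1 : ℝ) ^ i * f i with hS
  have hanti : Antitone f := by
    intro a b hab
    have : (2 * (a:ℝ) + 1) ≤ 2 * (b:ℝ) + 1 := by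
      have : (a:ℝ) ≤ b := by exact_mod_cast hab
      linarith
    exact one_div_le_one_div_of_le (by positivity) this
  have hL : Tendsto S atTop (nhds (π / 4)) := by
    have h := Real.tendsto_sum_pi_div_four
    simpa [hS, hf, mul_one_div, div_eq_mul_inv] using h
  have heq : (∑ p ∈ Finset.range n, (-1 : ℝ) ^ p / (2 * p + 1)) = S n :=
    Finset.sum_congr rfl fun i _ => by rw [div_eq_mul_inv]; simp [hf, div_eq_mul_inv]
  rw [heq]
  have hstep : ∀ k : ℕ, S (k + 1) = S k + (-1 : ℝ) ^ k * f k := fun k =>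
    Finset.sum_range_succ _ k
  have hlo : ∀ k : ℕ, S (2 * k) ≤ π / 4 := hanti.alternating_series_le_tendsto hL
  have hhi : ∀ k : ℕ, π / 4 ≤ S (2 * k + 1) := hanti.tendsto_le_alternating_series hL
  have hfpos : ∀ k : ℕ, (0:ℝ) < f k := fun k => by simp only [hf]; positivity
  have hfval : ∀ k : ℕ, f k = 1 / (2 * (k:ℝ) + 1) := fun k => rfl
  rw [abs_le]
  rcases Nat.even_or_odd n with ⟨k, hk⟩ | ⟨k, hk⟩
  · have hk2 : n = 2 * k := by omega
    subst hk2
    have h1 := hlo k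
    have h2 := hhi k
    have h3 := hstep (2 * k)
    have hpow : ((-1 : ℝ)) ^ (2 * k) = 1 := by
      rw [pow_mul]; norm_num
    rw [h3, hpow, one_mul] at h2
    rw [hfval] at h2
    push_cast at h2 ⊢
    constructor
    · have := hfpos (2 * k)
      rw [hfval] at this
      push_cast at this
      linarith
    · linarith
  · have hk2 : n = 2 * k + 1 := by omega
    subst hk2
    have h1 := hhi k
    have h2 := hlo (k + 1)
    have h3 := hstep (2 * k + 1)
    have h4 : 2 * (k + 1) = 2 * k + 1 + 1 := by ring
    rw [h4, h3] at h2
    have hpow : ((-1 : ℝ)) ^ (2 * k + 1) = -1 := by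
      rw [pow_succ, pow_mul]; norm_num
    rw [hpow, neg_one_mul] at h2
    rw [hfval] at h2
    push_cast at h1 h2 ⊢
    constructor
    · linarith
    · have := hfpos (2 * k + 1)
      rw [hfval] at this
      push_cast at this
      linarith

open Real in
theorem stmt_19 (M : ℕ) (hM : 1 ≤ M) (A : ℝ)
    (hA : Tendsto (fun n : ℕ => (1 / (n : ℝ)) * ∑ i ∈ Finset.range n, 1 / (1 + ((i : ℝ) / n) ^ 2))
      atTop (nhds A)) :
    ∀ m : ℕ, M ≤ m →
      |A - ∑ p ∈ Finset.range (m + 1), (-1 : ℝ) ^ p / (2 * p + 1)| ≤ 2 / (2 * M + 1) := by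
  have hApi : A = π / 4 := tendsto_nhds_unique hA riemann_lim
  intro m hm
  rw [hApi]
  refine (leibniz_err (m + 1)).trans ?_
  have h1 : (0:ℝ) < 2 * (M:ℝ) + 1 := by positivity
  have hMm : (M : ℝ) ≤ m := by exact_mod_cast hm
  rw [div_le_div_iff₀ (by push_cast; linarith) h1]
  push_cast
  nlinarith
end
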